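/- Let Ξ be a measurable space and Ξ0 ⊆ Ξ a measurable subset. Let P⋆ and P_c be probability measures on Ξ with P⋆(Ξ0) ≥ 1−γ for some γ ∈ [0,1) and P_c(Ξ0) > 0. Let the deployment law be P̃ = (1−ε⋆)P⋆ + ε⋆·R̃ with ε⋆ ∈ [0,1) and R̃ a probability measure on Ξ. Assume the in-bulk mismatch representation P⋆_{Ξ0} = (1−ε_c)·P_{c,Ξ0} + ε_c·R_c holds for some ε_c ∈ [0,1) and some probability measure R_c supported on Ξ0. Let f : Ξ → ℝ be measurable and nonnegative, let p > 1, q := p/(p−1), and assume M_p := (E_{P̃}[f^p])^{1/p} < ∞. Set ρ := R̃(Ξ0)/P̃(Ξ0) (well defined since P̃(Ξ0) ≥ (1−ε⋆)(1−γ) > 0) and ε_eff := ε_c + ε⋆·ρ − ε⋆·ε_c·ρ. Then E_{P̃}[f] ≤ (1−ε_eff)·E_{P_{c,Ξ0}}[f] + ε_eff·sup_{ξ ∈ Ξ0} f(ξ) + M_p·((1−ε⋆)γ + ε⋆(1 − R̃(Ξ0)))^{1/q}. -/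

import Mathlib

open MeasureTheory
open scoped ENNReal

/-- Normalised restriction of a measure to a set: `P_{Ξ₀}(A) = P(A ∩ Ξ₀)/P(Ξ₀)`. -/
noncomputable def nrestrict {Ξ : Type*} [MeasurableSpace Ξ]
    (P : Measure Ξ) (S : Set Ξ) : Measure Ξ :=
  (P S)⁻¹ • P.restrict S

set_option maxHeartbeats 1000000 in
/-- **Risk certificate.**
Suppose `P⋆(Ξ₀) ≥ 1-γ`, the deployment law is `P̃ = (1-ε⋆)P⋆ + ε⋆R̃`, the in-bulk
mismatch representation `P⋆_{Ξ₀} = (1-ε_c)·P_{c,Ξ₀} + ε_c·R_c` holds with `R_c`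
supported on `Ξ₀`, `f ≥ 0` is measurable with `M_p = (E_{P̃}[f^p])^{1/p} < ∞` for some
`p > 1`, `q = p/(p-1)`. With `ρ = R̃(Ξ₀)/P̃(Ξ₀)` and
`ε_eff = ε_c + ε⋆ρ - ε⋆ε_cρ`, we have
`E_{P̃}[f] ≤ (1-ε_eff)·E_{P_{c,Ξ₀}}[f] + ε_eff·sup_{Ξ₀} f
  + M_p·((1-ε⋆)γ + ε⋆(1 - R̃(Ξ₀)))^{1/q}`. -/
theorem risk_certificate
    {Ξ : Type*} [MeasurableSpace Ξ] (Ξ₀ : Set Ξ) (hΞ₀ : MeasurableSet Ξ₀)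
    (Pstar Pc : Measure Ξ) [IsProbabilityMeasure Pstar] [IsProbabilityMeasure Pc]
    (γ : ℝ) (hγ0 : 0 ≤ γ) (hγ1 : γ < 1)
    (hcov : ENNReal.ofReal (1 - γ) ≤ Pstar Ξ₀)
    (hPc : Pc Ξ₀ ≠ 0)
    (εstar : ℝ) (hεstar0 : 0 ≤ εstar) (hεstar1 : εstar < 1)
    (Rtil : Measure Ξ) [IsProbabilityMeasure Rtil]
    (Ptil : Measure Ξ)
    (hPtil : Ptil = ENNReal.ofReal (1 - εstar) • Pstar + ENNReal.ofReal εstar • Rtil)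
    (εc : ℝ) (hεc0 : 0 ≤ εc) (hεc1 : εc < 1)
    (Rc : Measure Ξ) [IsProbabilityMeasure Rc] (hRc : Rc Ξ₀ = 1)
    (hmis : nrestrict Pstar Ξ₀
      = ENNReal.ofReal (1 - εc) • nrestrict Pc Ξ₀ + ENNReal.ofReal εc • Rc)
    (f : Ξ → ℝ) (hfm : Measurable f) (hfnn : ∀ x, 0 ≤ f x)
    (p : ℝ) (hp : 1 < p) (q : ℝ) (hq : q = p / (p - 1))
    (hfp : Integrable (fun x => f x ^ p) Ptil)
    (Mp : ℝ) (hMp : Mp = (∫ x, f x ^ p ∂Ptil) ^ (1 / p))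
    (ρ : ℝ) (hρ : ρ = (Rtil Ξ₀).toReal / (Ptil Ξ₀).toReal)
    (εeff : ℝ) (hεeff : εeff = εc + εstar * ρ - εstar * εc * ρ) :
    ((∫ x, f x ∂Ptil : ℝ) : EReal)
      ≤ (((1 - εeff) * ∫ x, f x ∂(nrestrict Pc Ξ₀) : ℝ) : EReal)
        + (εeff : EReal) * (⨆ ξ ∈ Ξ₀, (f ξ : EReal))
        + ((Mp * ((1 - εstar) * γ + εstar * (1 - (Rtil Ξ₀).toReal)) ^ (1 / q) : ℝ)
            : EReal) := by
  have hp0 : (0:ℝ) < p := lt_trans zero_lt_one hp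
  have hpq : p.HolderConjugate q := (Real.holderConjugate_iff_eq_conjExponent hp).2 hq
  have hq0 : (0:ℝ) < q := hpq.symm.pos
  set F : Ξ → ℝ≥0∞ := fun x => ENNReal.ofReal (f x) with hFdef
  have hFm : Measurable F := hfm.ennreal_ofReal
  -- Ptil is a probability measure
  have hPtilP : IsProbabilityMeasure Ptil := by
    constructor
    rw [hPtil]
    simp only [Measure.add_apply, Measure.smul_apply, smul_eq_mul, measure_univ, mul_one]
    rw [← ENNReal.ofReal_add (by linarith) hεstar0]
    norm_num
  -- basic positivity facts on `Pstar Ξ₀`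
  have hPs0 : Pstar Ξ₀ ≠ 0 := by
    intro h
    rw [h] at hcov
    simp only [nonpos_iff_eq_zero, ENNReal.ofReal_eq_zero] at hcov
    linarith
  have hPsT : Pstar Ξ₀ ≠ ⊤ := measure_ne_top _ _
  -- finiteness of the p-th moment lintegral
  have hFp : ∀ x, F x ^ p = ENNReal.ofReal (f x ^ p) := fun x =>
    ENNReal.ofReal_rpow_of_nonneg (hfnn x) hp0.le
  have hMom : ∫⁻ x, F x ^ p ∂Ptil ≠ ⊤ := by
    simp only [hFp]
    exact hfp.lintegral_lt_top.ne
  set Mp' : ℝ≥0∞ := (∫⁻ x, F x ^ p ∂Ptil) ^ (1 / p) with hMp'def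
  have hMp'T : Mp' ≠ ⊤ := by
    rw [hMp'def]
    exact (ENNReal.rpow_lt_top_of_nonneg (by positivity) hMom).ne
  have hMpMp' : Mp = Mp'.toReal := by
    rw [hMp, hMp'def, ← ENNReal.toReal_rpow]
    congr 1
    rw [integral_eq_lintegral_of_nonneg_ae (Filter.Eventually.of_forall fun x => Real.rpow_nonneg (hfnn x) p)
      ((by fun_prop : Measurable fun x => f x ^ p).aestronglyMeasurable)]
    congr 1
    exact lintegral_congr fun x => by rw [hFp]
  have hMpnn : 0 ≤ Mp := by
    rw [hMpMp']; exact ENNReal.toReal_nonneg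
  -- Hölder: tail bound
  have htail : ∫⁻ x in Ξ₀ᶜ, F x ∂Ptil ≤ Mp' * (Ptil Ξ₀ᶜ) ^ (1 / q) := by
    set g : Ξ → ℝ≥0∞ := (Ξ₀ᶜ).indicator (fun _ => (1:ℝ≥0∞)) with hgdef
    have hgm : Measurable g := measurable_const.indicator hΞ₀.compl
    have hind : ∀ x, (fun a => (F * g) a) x = (Ξ₀ᶜ).indicator F x := by
      intro x
      by_cases hx : x ∈ Ξ₀ᶜ <;> simp [hgdef, hx, Set.indicator_of_mem, Set.indicator_of_notMem]
    have hH := ENNReal.lintegral_mul_le_Lp_mul_Lq Ptil hpq hFm.aemeasurable hgm.aemeasurable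
    rw [lintegral_congr hind, lintegral_indicator hΞ₀.compl] at hH
    refine le_trans hH ?_
    rw [hMp'def]
    refine mul_le_mul_right (le_of_eq ?_) _
    have hgq : ∀ x, g x ^ q = g x := by
      intro x
      by_cases hx : x ∈ Ξ₀ᶜ <;>
        simp [hgdef, hx, Set.indicator_of_mem, Set.indicator_of_notMem,
          ENNReal.zero_rpow_of_pos hq0]
    rw [lintegral_congr hgq, hgdef, lintegral_indicator hΞ₀.compl, setLIntegral_one]
  -- lintegral over Ξ₀ w.r.t. Pstar, via the mismatch representation
  have hnPs : ∫⁻ x, F x ∂(nrestrict Pstar Ξ₀)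
      = ENNReal.ofReal (1 - εc) * ∫⁻ x, F x ∂(nrestrict Pc Ξ₀)
        + ENNReal.ofReal εc * ∫⁻ x, F x ∂ Rc := by
    rw [hmis]
    simp [lintegral_add_measure, lintegral_smul_measure]
  have hPsRes : ∫⁻ x in Ξ₀, F x ∂Pstar
      = Pstar Ξ₀ * ∫⁻ x, F x ∂(nrestrict Pstar Ξ₀) := by
    rw [nrestrict, lintegral_smul_measure, smul_eq_mul, ← mul_assoc, ENNReal.mul_inv_cancel hPs0 hPsT,
      one_mul]
  -- the key finiteness: ∫⁻ F ∂Ptil < ∞ and the c-integral is finite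
  have hLP : ∫⁻ x, F x ∂Ptil ≠ ⊤ := by
    have hle : ∀ x, F x ≤ ENNReal.ofReal (f x ^ p) + 1 := by
      intro x
      by_cases hx : f x ≤ 1
      · calc F x ≤ ENNReal.ofReal 1 := ENNReal.ofReal_le_ofReal hx
          _ ≤ _ := by simp
      · push_neg at hx
        calc F x = ENNReal.ofReal (f x ^ (1:ℝ)) := by rw [Real.rpow_one]
          _ ≤ ENNReal.ofReal (f x ^ p) :=
            ENNReal.ofReal_le_ofReal (Real.rpow_le_rpow_of_exponent_le hx.le hp.le)
          _ ≤ _ := le_self_add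
    refine ne_top_of_le_ne_top ?_ (lintegral_mono hle)
    rw [lintegral_add_right _ measurable_const]
    simp only [lintegral_const, measure_univ, mul_one]
    refine ENNReal.add_ne_top.2 ⟨?_, ENNReal.one_ne_top⟩
    simpa only [hFp] using hfp.lintegral_lt_top.ne
  have hPsLe : ENNReal.ofReal (1 - εstar) * ∫⁻ x, F x ∂Pstar ≤ ∫⁻ x, F x ∂Ptil := by
    rw [hPtil]
    rw [lintegral_add_measure, lintegral_smul_measure]
    exact le_self_add
  have hLPs : ∫⁻ x, F x ∂Pstar ≠ ⊤ := by
    intro h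
    rw [h, ENNReal.mul_top (by simp [ENNReal.ofReal_eq_zero]; linarith)] at hPsLe
    exact hLP (top_le_iff.1 hPsLe)
  have hLc : ∫⁻ x, F x ∂(nrestrict Pc Ξ₀) ≠ ⊤ := by
    have h1 : ENNReal.ofReal (1 - εc) * ∫⁻ x, F x ∂(nrestrict Pc Ξ₀)
        ≤ ∫⁻ x, F x ∂(nrestrict Pstar Ξ₀) := by
      rw [hnPs]; exact le_self_add
    have h2 : ∫⁻ x, F x ∂(nrestrict Pstar Ξ₀) ≠ ⊤ := by
      rw [nrestrict, lintegral_smul_measure]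
      refine ENNReal.mul_ne_top (by simp [hPs0]) ?_
      exact ne_top_of_le_ne_top hLPs (lintegral_mono' Measure.restrict_le_self le_rfl)
    intro h
    rw [h, ENNReal.mul_top (by simp [ENNReal.ofReal_eq_zero]; linarith)] at h1
    exact h2 (top_le_iff.1 h1)
  -- real quantities
  set s : ℝ := (Pstar Ξ₀).toReal with hsdef
  set r : ℝ := (Rtil Ξ₀).toReal with hrdef
  set t : ℝ := (Ptil Ξ₀).toReal with htdef
  set I : ℝ := ∫ x, f x ∂(nrestrict Pc Ξ₀) with hIdef
  have hI : I = (∫⁻ x, F x ∂(nrestrict Pc Ξ₀)).toReal := by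
    rw [hIdef]
    exact integral_eq_lintegral_of_nonneg_ae (Filter.Eventually.of_forall hfnn)
      hfm.aestronglyMeasurable
  have hInn : 0 ≤ I := integral_nonneg hfnn
  have hs1 : s ≤ 1 := by
    rw [hsdef]
    exact ENNReal.toReal_le_of_le_ofReal zero_le_one (by simpa using prob_le_one)
  have hsγ : 1 - γ ≤ s := by
    rw [hsdef, ← ENNReal.toReal_ofReal (by linarith : (0:ℝ) ≤ 1 - γ)]
    exact ENNReal.toReal_mono hPsT hcov
  have hs0 : 0 ≤ s := ENNReal.toReal_nonneg
  have hr0 : 0 ≤ r := ENNReal.toReal_nonneg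
  have hr1 : r ≤ 1 := by
    rw [hrdef]
    exact ENNReal.toReal_le_of_le_ofReal zero_le_one (by simpa using prob_le_one)
  have ht_eq : t = (1 - εstar) * s + εstar * r := by
    rw [htdef, hPtil]
    simp only [Measure.add_apply, Measure.smul_apply, smul_eq_mul]
    rw [ENNReal.toReal_add (by finiteness) (by finiteness), ENNReal.toReal_mul,
      ENNReal.toReal_mul, ENNReal.toReal_ofReal (by linarith), ENNReal.toReal_ofReal hεstar0]
  have ht1 : t ≤ 1 := by
    rw [htdef]
    exact ENNReal.toReal_le_of_le_ofReal zero_le_one (by simpa using prob_le_one (μ := Ptil))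
  have ht0 : 0 < t := by
    rw [ht_eq]
    have hA : (0:ℝ) < (1 - εstar) * (1 - γ) := mul_pos (by linarith) (by linarith)
    have hB : (1 - εstar) * (1 - γ) ≤ (1 - εstar) * s :=
      mul_le_mul_of_nonneg_left hsγ (by linarith)
    have hCr : (0:ℝ) ≤ εstar * r := mul_nonneg hεstar0 hr0
    linarith
  have hTval : (Ptil Ξ₀ᶜ).toReal = (1 - εstar) * (1 - s) + εstar * (1 - r) := by
    rw [hPtil]
    simp only [Measure.add_apply, Measure.smul_apply, smul_eq_mul]
    rw [ENNReal.toReal_add (by finiteness) (by finiteness), ENNReal.toReal_mul,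
      ENNReal.toReal_mul, ENNReal.toReal_ofReal (by linarith), ENNReal.toReal_ofReal hεstar0,
      prob_compl_eq_one_sub hΞ₀, prob_compl_eq_one_sub hΞ₀,
      ENNReal.toReal_sub_of_le prob_le_one ENNReal.one_ne_top,
      ENNReal.toReal_sub_of_le prob_le_one ENNReal.one_ne_top]
    simp [hsdef, hrdef]
  have hρ' : ρ = r / t := hρ
  -- The main real-valued estimate, given a bound C on f over the relevant pieces.
  have main : ∀ C : ℝ, 0 ≤ C →
      ENNReal.ofReal εc * ∫⁻ x, F x ∂ Rc ≤ ENNReal.ofReal εc * ENNReal.ofReal C →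
      ENNReal.ofReal εstar * ∫⁻ x in Ξ₀, F x ∂ Rtil
        ≤ ENNReal.ofReal εstar * (ENNReal.ofReal C * Rtil Ξ₀) →
      ∫ x, f x ∂Ptil ≤ (1 - εeff) * I + εeff * C
        + Mp * ((1 - εstar) * γ + εstar * (1 - r)) ^ (1 / q) := by
    intro C hC0 hRcC hRtC
    have hsplit : ∫⁻ x in Ξ₀, F x ∂Ptil
        = ENNReal.ofReal (1 - εstar) * ∫⁻ x in Ξ₀, F x ∂Pstar
          + ENNReal.ofReal εstar * ∫⁻ x in Ξ₀, F x ∂ Rtil := by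
      rw [hPtil, Measure.restrict_add, Measure.restrict_smul, Measure.restrict_smul,
        lintegral_add_measure, lintegral_smul_measure, lintegral_smul_measure, smul_eq_mul, smul_eq_mul]
    have hchain : ∫⁻ x, F x ∂Ptil
        ≤ ENNReal.ofReal (1 - εstar)
            * (Pstar Ξ₀ * (ENNReal.ofReal (1 - εc) * ∫⁻ x, F x ∂(nrestrict Pc Ξ₀)
                + ENNReal.ofReal εc * ENNReal.ofReal C))
          + ENNReal.ofReal εstar * (ENNReal.ofReal C * Rtil Ξ₀)
          + Mp' * (Ptil Ξ₀ᶜ) ^ (1 / q) := by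
      calc ∫⁻ x, F x ∂Ptil = ∫⁻ x in Ξ₀, F x ∂Ptil + ∫⁻ x in Ξ₀ᶜ, F x ∂Ptil :=
            (lintegral_add_compl F hΞ₀).symm
        _ ≤ (ENNReal.ofReal (1 - εstar) * ∫⁻ x in Ξ₀, F x ∂Pstar
              + ENNReal.ofReal εstar * ∫⁻ x in Ξ₀, F x ∂ Rtil)
            + Mp' * (Ptil Ξ₀ᶜ) ^ (1 / q) := by
              rw [hsplit]; exact add_le_add le_rfl htail
        _ ≤ _ := by
            refine add_le_add (add_le_add ?_ hRtC) le_rfl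
            rw [hPsRes, hnPs]
            exact mul_le_mul_right (mul_le_mul_right (add_le_add le_rfl hRcC) _) _
    have hfinr : (Ptil Ξ₀ᶜ) ^ (1 / q) ≠ ⊤ :=
      (ENNReal.rpow_lt_top_of_nonneg (by positivity) (measure_ne_top _ _)).ne
    have hT1 : ENNReal.ofReal (1 - εstar)
        * (Pstar Ξ₀ * (ENNReal.ofReal (1 - εc) * ∫⁻ x, F x ∂(nrestrict Pc Ξ₀)
            + ENNReal.ofReal εc * ENNReal.ofReal C)) ≠ ⊤ :=
      ENNReal.mul_ne_top ENNReal.ofReal_ne_top (ENNReal.mul_ne_top hPsT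
        (ENNReal.add_ne_top.2 ⟨ENNReal.mul_ne_top ENNReal.ofReal_ne_top hLc,
          ENNReal.mul_ne_top ENNReal.ofReal_ne_top ENNReal.ofReal_ne_top⟩))
    have hT2 : ENNReal.ofReal εstar * (ENNReal.ofReal C * Rtil Ξ₀) ≠ ⊤ :=
      ENNReal.mul_ne_top ENNReal.ofReal_ne_top
        (ENNReal.mul_ne_top ENNReal.ofReal_ne_top (measure_ne_top _ _))
    have hT3 : Mp' * (Ptil Ξ₀ᶜ) ^ (1 / q) ≠ ⊤ := ENNReal.mul_ne_top hMp'T hfinr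
    have hJle : ∫ x, f x ∂Ptil
        ≤ (1 - εstar) * (s * ((1 - εc) * I + εc * C)) + εstar * (C * r)
          + Mp * ((Ptil Ξ₀ᶜ).toReal) ^ (1 / q) := by
      rw [integral_eq_lintegral_of_nonneg_ae (Filter.Eventually.of_forall hfnn)
        hfm.aestronglyMeasurable]
      refine le_trans (ENNReal.toReal_mono (ENNReal.add_ne_top.2
        ⟨ENNReal.add_ne_top.2 ⟨hT1, hT2⟩, hT3⟩) hchain) (le_of_eq ?_)
      rw [ENNReal.toReal_add (ENNReal.add_ne_top.2 ⟨hT1, hT2⟩) hT3, ENNReal.toReal_add hT1 hT2]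
      simp only [ENNReal.toReal_mul]
      rw [ENNReal.toReal_add (ENNReal.mul_ne_top ENNReal.ofReal_ne_top hLc)
        (ENNReal.mul_ne_top ENNReal.ofReal_ne_top ENNReal.ofReal_ne_top)]
      simp only [ENNReal.toReal_mul]
      rw [ENNReal.toReal_ofReal (by linarith : (0:ℝ) ≤ 1 - εstar),
        ENNReal.toReal_ofReal hεstar0, ENNReal.toReal_ofReal (by linarith : (0:ℝ) ≤ 1 - εc),
        ENNReal.toReal_ofReal hεc0, ENNReal.toReal_ofReal hC0,
        ← hMpMp', ← ENNReal.toReal_rpow, ← hsdef, ← hrdef, ← hI]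
    -- coefficient estimates
    have hdt : r / t * t = r := div_mul_cancel₀ r ht0.ne'
    have hεeff_eq : εeff = εc + εstar * (r / t) * (1 - εc) := by rw [hεeff, hρ']; ring
    have h1 : (1 - εeff) * t = (1 - εc) * ((1 - εstar) * s) := by
      rw [hεeff_eq]
      linear_combination (-(εstar * (1 - εc))) * hdt + (1 - εc) * ht_eq
    have haεc : (0:ℝ) ≤ (1 - εc) * ((1 - εstar) * s) := by
      have : (0:ℝ) ≤ 1 - εc := by linarith
      have h2 : (0:ℝ) ≤ (1 - εstar) * s := mul_nonneg (by linarith) hs0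
      exact mul_nonneg this h2
    have heff1 : (0:ℝ) ≤ 1 - εeff := by
      rw [← h1] at haεc
      exact (mul_nonneg_iff_of_pos_right ht0).1 haεc
    have hco1 : (1 - εstar) * s * (1 - εc) ≤ 1 - εeff := by
      linarith [h1, mul_nonneg heff1 (sub_nonneg.2 ht1)]
    have h2 : εeff * t = εc * t + εstar * r * (1 - εc) := by
      rw [hεeff_eq]
      linear_combination (εstar * (1 - εc)) * hdt
    have h3 : (εeff - ((1 - εstar) * s * εc + εstar * r)) * t
        = (1 - t) * (εc * ((1 - εstar) * s) + εstar * r) := by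
      linear_combination h2 + εc * ht_eq
    have hYnn : (0:ℝ) ≤ εc * ((1 - εstar) * s) + εstar * r :=
      add_nonneg (mul_nonneg hεc0 (mul_nonneg (by linarith) hs0)) (mul_nonneg hεstar0 hr0)
    have hco2 : (1 - εstar) * s * εc + εstar * r ≤ εeff := by
      have h4 : (0:ℝ) ≤ (εeff - ((1 - εstar) * s * εc + εstar * r)) * t := by
        rw [h3]; exact mul_nonneg (by linarith) hYnn
      have := (mul_nonneg_iff_of_pos_right ht0).1 h4
      linarith
    have hTle : ((Ptil Ξ₀ᶜ).toReal) ^ (1 / q)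
        ≤ ((1 - εstar) * γ + εstar * (1 - r)) ^ (1 / q) := by
      apply Real.rpow_le_rpow ENNReal.toReal_nonneg ?_ (by positivity)
      rw [hTval]
      have : (1 - εstar) * (1 - s) ≤ (1 - εstar) * γ :=
        mul_le_mul_of_nonneg_left (by linarith) (by linarith)
      linarith
    have p3 : Mp * ((Ptil Ξ₀ᶜ).toReal) ^ (1 / q)
        ≤ Mp * ((1 - εstar) * γ + εstar * (1 - r)) ^ (1 / q) :=
      mul_le_mul_of_nonneg_left hTle hMpnn
    have q1 : (1 - εstar) * s * (1 - εc) * I ≤ (1 - εeff) * I :=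
      mul_le_mul_of_nonneg_right hco1 hInn
    have q2 : ((1 - εstar) * s * εc + εstar * r) * C ≤ εeff * C :=
      mul_le_mul_of_nonneg_right hco2 hC0
    refine le_trans hJle ?_
    linarith [q1, q2, p3]
  -- nonnegativity of εeff and the supremum
  have hdt : r / t * t = r := div_mul_cancel₀ r ht0.ne'
  have hρnn : 0 ≤ ρ := by
    rw [hρ']
    exact div_nonneg hr0 ht0.le
  have hεeffnn : 0 ≤ εeff := by
    rw [hεeff]
    linarith [mul_nonneg (mul_nonneg hεstar0 hρnn) (by linarith : (0:ℝ) ≤ 1 - εc)]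
  have hne : Ξ₀.Nonempty := by
    rcases Set.eq_empty_or_nonempty Ξ₀ with h | h
    · exact absurd (h ▸ measure_empty) hPs0
    · exact h
  obtain ⟨ξ₀, hξ₀⟩ := hne
  set S : EReal := ⨆ ξ ∈ Ξ₀, (f ξ : EReal) with hSdef
  have hS0 : (0 : EReal) ≤ S := by
    refine le_trans ?_ (le_biSup (fun ξ => ((f ξ : ℝ) : EReal)) hξ₀)
    exact EReal.coe_nonneg.2 (hfnn ξ₀)
  have hSbot : S ≠ ⊥ := fun h => by simp [h] at hS0
  by_cases hStop : S = ⊤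
  · rcases eq_or_lt_of_le hεeffnn with heq | hpos
    · -- εeff = 0
      have heff0 : εeff = 0 := heq.symm
      have hsum : εc + εstar * ρ * (1 - εc) = 0 := by rw [← heff0, hεeff]; ring
      have hεcz : εc = 0 := by
        linarith [mul_nonneg (mul_nonneg hεstar0 hρnn) (by linarith : (0:ℝ) ≤ 1 - εc)]
      have hsρ : εstar * ρ = 0 := by
        rw [hεcz] at hsum
        linarith [hsum]
      have hsr : εstar * r = 0 := by
        have : εstar * (r / t) * t = 0 := by rw [hρ'] at hsρ; rw [hsρ, zero_mul]
        rw [mul_assoc, hdt] at this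
        exact this
      have hmain := main 0 le_rfl (by simp [hεcz]) ?_
      · rw [hStop]
        have hz : ((εeff : EReal)) * (⊤ : EReal) = 0 := by
          rw [heff0, EReal.coe_zero]; exact zero_mul ⊤
        rw [hz, add_zero]  -- might need reassociation
        rw [← EReal.coe_add]
        refine EReal.coe_le_coe_iff.2 ?_
        rw [heff0] at hmain ⊢
        simpa using hmain
      · rcases mul_eq_zero.1 hsr with h | h
        · simp [h]
        · have hRt0 : Rtil Ξ₀ = 0 := by
            rcases (ENNReal.toReal_eq_zero_iff _).1 h with h' | h'
            · exact h'
            · exact absurd h' (measure_ne_top _ _)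
          rw [setLIntegral_measure_zero _ _ hRt0]
          simp
    · -- εeff > 0 : the right-hand side is ⊤
      rw [hStop]
      have hz : ((εeff : EReal)) * (⊤ : EReal) = ⊤ :=
        EReal.coe_mul_top_of_pos hpos
      rw [hz, EReal.add_top_of_ne_bot (EReal.coe_ne_bot _), EReal.top_add_of_ne_bot
        (EReal.coe_ne_bot _)]
      exact le_top
  · -- bounded case
    set C : ℝ := S.toReal with hCdef
    have hSC : (C : EReal) = S := EReal.coe_toReal hStop hSbot
    have hC0 : 0 ≤ C := by
      rw [← EReal.coe_le_coe_iff (x := 0) (y := C)]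
      rw [hSC]
      exact_mod_cast hS0
    have hbd : ∀ ξ ∈ Ξ₀, f ξ ≤ C := by
      intro ξ hξ
      have h := le_biSup (fun ξ => ((f ξ : ℝ) : EReal)) hξ
      rw [← hSdef, ← hSC] at h
      exact EReal.coe_le_coe_iff.1 h
    have hRcc : Rc Ξ₀ᶜ = 0 := by
      rw [measure_compl hΞ₀ (measure_ne_top _ _), hRc, measure_univ, tsub_self]
    have hRcbound : ∫⁻ x, F x ∂ Rc ≤ ENNReal.ofReal C := by
      calc ∫⁻ x, F x ∂ Rc = ∫⁻ x in Ξ₀, F x ∂ Rc + ∫⁻ x in Ξ₀ᶜ, F x ∂ Rc :=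
            (lintegral_add_compl F hΞ₀).symm
        _ = ∫⁻ x in Ξ₀, F x ∂ Rc := by rw [setLIntegral_measure_zero _ _ hRcc, add_zero]
        _ ≤ ∫⁻ _ in Ξ₀, ENNReal.ofReal C ∂ Rc :=
            setLIntegral_mono measurable_const fun x hx => ENNReal.ofReal_le_ofReal (hbd x hx)
        _ = ENNReal.ofReal C * Rc Ξ₀ := setLIntegral_const _ _
        _ = ENNReal.ofReal C := by rw [hRc, mul_one]
    have hRtbound : ∫⁻ x in Ξ₀, F x ∂ Rtil ≤ ENNReal.ofReal C * Rtil Ξ₀ := by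
      calc ∫⁻ x in Ξ₀, F x ∂ Rtil ≤ ∫⁻ _ in Ξ₀, ENNReal.ofReal C ∂ Rtil :=
            setLIntegral_mono measurable_const fun x hx => ENNReal.ofReal_le_ofReal (hbd x hx)
        _ = ENNReal.ofReal C * Rtil Ξ₀ := setLIntegral_const _ _
    have hmain := main C hC0 (mul_le_mul_right hRcbound _) (mul_le_mul_right hRtbound _)
    rw [← hSC, ← EReal.coe_mul, ← EReal.coe_add, ← EReal.coe_add]
    exact EReal.coe_le_coe_iff.2 (by linarith)
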